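/- For every α ∈ ℕ and every n ∈ ℕ, the number of pairs (x, y) ∈ ℤ² with n = x² + α·y² is at most 6·τ(n)², where τ(n) is the number of positive divisors of n. -/

import Mathlib

/-!
Dividing a representation `n = x² + α y²` by `g = gcd x y` gives a primitive representation of
`m = n / g²`, and `g` is one of at most `τ(n)` divisors of `n`. For a primitive representation
`(a, b)` of `m`, `b` is invertible modulo `m` and `a / b` is a square root of `-α` modulo `m`. Two
primitive representations with the same root differ by a unit of `ℤ[√-α]` (compose one with the
conjugate of the other), so each root accounts for at most four of them. By the Chinese remainder
theorem and the cyclicity of `(ZMod (p ^ k))ˣ` (up to a factor 2 when `p = 2`), `-α` has at most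
`τ(m)` square roots modulo `m`, as long as no `p²` dividing `m` has `p ∣ α`. A primitive
representation rules this out unless also `p² ∣ α`, and a common square factor `p²` of `α` and `n`
is removed beforehand, since it forces `p ∣ x`. Altogether there are at most `4 τ(n)²`
representations.
-/

theorem Set.ncard_biUnion_le {ι α : Type*} (s : Finset ι) (t : ι → Set α) :
    (⋃ i ∈ s, t i).ncard ≤ ∑ i ∈ s, (t i).ncard := by
  classical
  induction s using Finset.induction_on with
  | empty => simp
  | insert i s hi ih =>
    rw [Finset.set_biUnion_insert, Finset.sum_insert hi]
    exact (Set.ncard_union_le _ _).trans (by omega)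

theorem Set.ncard_le_mul_ncard_of_mapsTo {α β : Type*} {s : Set α} {t : Set β} {f : α → β}
    (ht : t.Finite) (hf : Set.MapsTo f s t) (n : ℕ)
    (hn : ∀ b ∈ t, (s ∩ f ⁻¹' {b}).ncard ≤ n) : s.ncard ≤ n * t.ncard := by
  classical
  by_cases hs : s.Finite
  swap
  · simp [Set.Infinite.ncard hs]
  obtain ⟨S, rfl⟩ := hs.exists_finset_coe
  obtain ⟨T, rfl⟩ := ht.exists_finset_coe
  rw [Set.ncard_coe_finset, Set.ncard_coe_finset]
  refine Finset.card_le_mul_card_image_of_maps_to hf n fun b hb => ?_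
  have hfiber : ↑S ∩ f ⁻¹' {b} = (↑(S.filter fun a => f a = b) : Set α) := by
    ext; simp
  rw [← Set.ncard_coe_finset, ← hfiber]
  exact hn b hb

theorem ncard_pow_eq_le_ncard_pow_eq_one {M : Type*} [CommMonoid M] [Finite M] {c : M}
    (hc : IsUnit c) {n : ℕ} (hn : n ≠ 0) :
    {x : M | x ^ n = c}.ncard ≤ {x : M | x ^ n = 1}.ncard := by
  rcases Set.eq_empty_or_nonempty {x : M | x ^ n = c} with h | ⟨s, hs : s ^ n = c⟩
  · simp [h]
  have hsu : IsUnit s := (isUnit_pow_iff hn).mp (hs ▸ hc)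
  refine Set.ncard_le_ncard_of_injOn (· * ↑hsu.unit⁻¹) (fun x (hx : x ^ n = c) => ?_)
    (fun x _ y _ hxy => (Units.mul_left_inj _).mp hxy) (Set.toFinite _)
  change (x * ↑hsu.unit⁻¹) ^ n = 1
  rw [mul_pow, hx, ← hs, ← mul_pow, hsu.mul_val_inv, one_pow]

theorem ncard_pow_eq_one_le_of_isCyclic {M : Type*} [CommMonoid M] [Fintype M] [DecidableEq M]
    [IsCyclic Mˣ] {n : ℕ} (hn : 0 < n) : {x : M | x ^ n = 1}.ncard ≤ n := by
  have himage : {x : M | x ^ n = 1} =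
      Units.val '' ↑(Finset.univ.filter fun u : Mˣ => u ^ n = 1) := by
    ext x
    simp only [Finset.coe_filter, Finset.mem_univ, true_and, Set.mem_image]
    refine ⟨fun hx => ⟨Units.ofPowEqOne x n hx hn.ne', Units.pow_ofPowEqOne hx hn.ne', rfl⟩,
      ?_⟩
    rintro ⟨u, hu : u ^ n = 1, rfl⟩
    show (u : M) ^ n = 1
    rw [← Units.val_pow_eq_pow_val, hu, Units.val_one]
  rw [himage, Set.ncard_image_of_injective _ Units.val_injective, Set.ncard_coe_finset]
  exact IsCyclic.card_pow_eq_one_le hn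

theorem ncard_pow_eq_of_mulEquiv_prod {M N P : Type*} [Monoid M] [Monoid N] [Monoid P]
    (e : M ≃* N × P) (n : ℕ) (c : M) :
    {x : M | x ^ n = c}.ncard =
      {y : N | y ^ n = (e c).1}.ncard * {z : P | z ^ n = (e c).2}.ncard := by
  rw [← Nat.card_coe_set_eq, ← Nat.card_coe_set_eq, ← Nat.card_coe_set_eq, ← Nat.card_prod]
  refine Nat.card_congr ((e.toEquiv.subtypeEquiv fun x => ?_).trans (Equiv.Set.prod _ _))
  change x ^ n = c ↔ (e x).1 ^ n = (e c).1 ∧ (e x).2 ^ n = (e c).2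
  rw [← e.injective.eq_iff, map_pow, Prod.ext_iff, Prod.pow_fst, Prod.pow_snd]

theorem Int.two_pow_dvd_two_mul_sub_one_or_add_one {k : ℕ} {u : ℤ} (h : 2 ^ k ∣ u ^ 2 - 1) :
    2 ^ k ∣ 2 * (u - 1) ∨ 2 ^ k ∣ 2 * (u + 1) := by
  rcases k.eq_zero_or_pos with rfl | hk
  · simp
  have hodd : u % 2 = 1 := by
    have h2 : (2 : ℤ) ∣ (u - 1) * (u + 1) :=
      (dvd_pow_self 2 hk.ne').trans (h.trans ⟨1, by ring⟩)
    rcases Int.prime_two.dvd_or_dvd h2 with ⟨v, hv⟩ | ⟨v, hv⟩ <;> omega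
  -- one of `u - 1`, `u + 1` is twice an odd number
  rcases (by omega : u % 4 = 1 ∨ u % 4 = 3) with h4 | h4
  · obtain ⟨w, hw⟩ : ∃ w, u + 1 = 2 * (2 * w + 1) := ⟨u / 4, by omega⟩
    refine Or.inl (Int.prime_two.pow_dvd_of_dvd_mul_right k (b := 2 * w + 1) (by omega) ?_)
    exact h.trans ⟨1, by linear_combination -(u - 1) * hw⟩
  · obtain ⟨w, hw⟩ : ∃ w, u - 1 = 2 * (2 * w + 1) := ⟨u / 4, by omega⟩
    refine Or.inr (Int.prime_two.pow_dvd_of_dvd_mul_right k (b := 2 * w + 1) (by omega) ?_)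
    exact h.trans ⟨1, by linear_combination -(u + 1) * hw⟩

theorem ZMod.two_nsmul_sub_one_or_add_one_eq_zero {k : ℕ} {u : ZMod (2 ^ k)} (hu : u ^ 2 = 1) :
    2 • (u - 1) = 0 ∨ 2 • (u + 1) = 0 := by
  obtain ⟨U, rfl⟩ := ZMod.intCast_surjective u
  have h : ((2 ^ k : ℕ) : ℤ) ∣ U ^ 2 - 1 := by
    rw [← ZMod.intCast_zmod_eq_zero_iff_dvd]; push_cast; rw [hu, sub_self]
  push_cast at h
  simp only [nsmul_eq_mul, Nat.cast_ofNat]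
  rcases Int.two_pow_dvd_two_mul_sub_one_or_add_one h with h' | h' <;> [left; right] <;>
  · have := (ZMod.intCast_zmod_eq_zero_iff_dvd _ (2 ^ k)).mpr (by exact_mod_cast h')
    push_cast at this
    exact this

theorem ZMod.ncard_sq_eq_one_two_pow_le (k : ℕ) : {u : ZMod (2 ^ k) | u ^ 2 = 1}.ncard ≤ 4 := by
  set K : Finset (ZMod (2 ^ k)) := Finset.univ.filter fun x => 2 • x = 0
  have hK : K.card ≤ 2 := IsAddCyclic.card_nsmul_eq_zero_le two_pos
  have hK_mem {x} (hx : 2 • x = 0) : x ∈ K := Finset.mem_filter.mpr ⟨Finset.mem_univ _, hx⟩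
  have hsub : {u : ZMod (2 ^ k) | u ^ 2 = 1} ⊆ ↑(K.image (1 + ·) ∪ K.image (-1 + ·)) := by
    intro u hu
    rw [Finset.coe_union, Set.mem_union, Finset.mem_coe, Finset.mem_coe]
    rcases ZMod.two_nsmul_sub_one_or_add_one_eq_zero hu with h | h
    · exact Or.inl (Finset.mem_image.mpr ⟨u - 1, hK_mem h, by ring⟩)
    · exact Or.inr (Finset.mem_image.mpr ⟨u + 1, hK_mem h, by ring⟩)
  calc _ ≤ (K.image (1 + ·) ∪ K.image (-1 + ·)).card :=
        (Set.ncard_le_ncard hsub (Finset.finite_toSet _)).trans (Set.ncard_coe_finset _).le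
    _ ≤ K.card + K.card :=
        (Finset.card_union_le _ _).trans (add_le_add Finset.card_image_le Finset.card_image_le)
    _ ≤ 4 := by omega

theorem ZMod.isUnit_intCast_of_isCoprime {m : ℕ} {x : ℤ} (h : IsCoprime x m) :
    IsUnit (x : ZMod m) := by
  obtain ⟨u, v, huv⟩ := h
  exact isUnit_iff_exists_inv'.mpr ⟨u, by simpa using congrArg (Int.cast : ℤ → ZMod m) huv⟩

theorem ZMod.ncard_sq_eq_prime_pow_le {p k : ℕ} (hp : p.Prime) (hk : 0 < k) (c : ℤ)
    (hc : (p : ℤ) ∣ c → k = 1) : {s : ZMod (p ^ k) | s ^ 2 = c}.ncard ≤ k + 1 := by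
  have := Fact.mk hp
  by_cases hpc : (p : ℤ) ∣ c
  · obtain rfl := hc hpc
    rw [pow_one, (ZMod.intCast_zmod_eq_zero_iff_dvd c p).mpr hpc]
    calc _ ≤ ({0} : Set (ZMod p)).ncard :=
          Set.ncard_le_ncard (fun s (hs : s ^ 2 = 0) => pow_eq_zero_iff two_ne_zero |>.mp hs)
      _ ≤ 1 + 1 := by simp
  have hunit : IsUnit (c : ZMod (p ^ k)) := by
    refine ZMod.isUnit_intCast_of_isCoprime ?_
    push_cast
    exact ((Nat.prime_iff_prime_int.mp hp).coprime_iff_not_dvd.mpr hpc).symm.pow_right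
  refine (ncard_pow_eq_le_ncard_pow_eq_one hunit two_ne_zero).trans ?_
  by_cases hcyc : IsCyclic (ZMod (p ^ k))ˣ
  · exact (ncard_pow_eq_one_le_of_isCyclic two_pos).trans (by omega)
  obtain rfl : p = 2 := by
    by_contra hp2
    exact hcyc (ZMod.isCyclic_units_of_prime_pow p hp hp2 k)
  have hk3 : 3 ≤ k := by
    by_contra hk3
    exact hcyc ((ZMod.isCyclic_units_two_pow_iff k).mpr (by omega))
  exact (ZMod.ncard_sq_eq_one_two_pow_le k).trans (by omega)

theorem ZMod.ncard_sq_eq_le_card_divisors (c : ℤ) {m : ℕ} (hm : 0 < m)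
    (hc : ∀ p : ℕ, p.Prime → p ^ 2 ∣ m → ¬ (p : ℤ) ∣ c) :
    {s : ZMod m | s ^ 2 = c}.ncard ≤ m.divisors.card := by
  induction m using Nat.recOnPosPrimePosCoprime with
  | zero => omega
  | one => exact (Set.ncard_le_one_of_subsingleton _).trans (by simp)
  | prime_pow p k hp hk =>
    rw [Nat.divisors_prime_pow hp, Finset.card_map, Finset.card_range]
    refine ZMod.ncard_sq_eq_prime_pow_le hp hk c fun hpc => ?_
    by_contra hk1
    exact hc p hp (pow_dvd_pow p (by omega)) hpc
  | coprime a b ha hb hab iha ihb =>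
    rw [ncard_pow_eq_of_mulEquiv_prod (ZMod.chineseRemainder hab).toMulEquiv,
      hab.card_divisors_mul]
    have he : (ZMod.chineseRemainder hab).toMulEquiv (c : ZMod (a * b)) =
        ((c : ZMod a), (c : ZMod b)) := by
      ext <;> simp
    rw [he]
    exact Nat.mul_le_mul
      (iha (by omega) fun p hp hpa => hc p hp (hpa.mul_right b))
      (ihb (by omega) fun p hp hpb => hc p hp (hpb.mul_left a))

theorem IsCoprime.isCoprime_sq_add_mul_sq {R : Type*} [CommRing R] {a b : R} (h : IsCoprime a b)
    (α : R) : IsCoprime b (a ^ 2 + α * b ^ 2) := by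
  rw [show α * b ^ 2 = b * (α * b) by ring]
  exact h.symm.pow_right.add_mul_left_right _

theorem Prime.sq_dvd_of_sq_dvd_sq_add_mul_sq {R : Type*} [CommRing R] [IsDomain R] {p a b α : R}
    (hp : Prime p) (hcop : IsCoprime b (a ^ 2 + α * b ^ 2)) (hpm : p ^ 2 ∣ a ^ 2 + α * b ^ 2)
    (hpα : p ∣ α) : p ^ 2 ∣ α := by
  have hpm' : p ∣ a ^ 2 + α * b ^ 2 := (dvd_pow_self p two_ne_zero).trans hpm
  have hpa : p ∣ a := hp.dvd_of_dvd_pow ((dvd_add_left (hpα.mul_right _)).mp hpm')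
  have hpb : ¬ p ∣ b ^ 2 := fun h =>
    hp.not_isUnit (hcop.isUnit_of_dvd' (hp.dvd_of_dvd_pow h) hpm')
  exact hp.pow_dvd_of_dvd_mul_right 2 hpb
    ((dvd_add_right (pow_dvd_pow_of_dvd hpa 2)).mp hpm)

theorem Int.eq_of_sq_add_mul_sq_eq_of_dvd {α m a b c d : ℤ} (hα : 1 ≤ α) (hm : 0 < m)
    (hab : m = a ^ 2 + α * b ^ 2) (hcd : m = c ^ 2 + α * d ^ 2) (hdvd : m ∣ a * d - c * b) :
    (c, d) = (a, b) ∨ (c, d) = (-a, -b) ∨ (c, d) = (-b, a) ∨ (c, d) = (b, -a) := by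
  obtain ⟨t, ht⟩ := hdvd
  -- the product of `a + b √-α` with the conjugate of `c + d √-α` has norm `m²`
  set A := a * c + α * b * d
  have hnorm : A ^ 2 + α * (m * t) ^ 2 = m ^ 2 := by
    rw [← ht]; linear_combination (-(c ^ 2 + α * d ^ 2)) * hab - m * hcd
  have hc : m * c = A * a - α * (m * t) * b := by rw [← ht]; linear_combination c * hab
  have hd : m * d = (m * t) * a + A * b := by rw [← ht]; linear_combination d * hab
  have ht_sq : t ^ 2 ≤ 1 := by nlinarith [sq_nonneg A, sq_nonneg t]
  obtain ⟨ht₁, ht₂⟩ : -1 ≤ t ∧ t ≤ 1 := ⟨by nlinarith, by nlinarith⟩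
  have cancel {u v : ℤ} (h : m * u = m * v) : u = v := mul_left_cancel₀ hm.ne' h
  have rotation : t ^ 2 = 1 → A = 0 ∧ α = 1 := fun ht1 => by
    have hA : A = 0 := pow_eq_zero_iff two_ne_zero |>.mp <| by
      nlinarith [sq_nonneg A, mul_nonneg (sub_nonneg.2 hα) (sq_nonneg m)]
    refine ⟨hA, mul_right_cancel₀ (pow_ne_zero 2 hm.ne') ?_⟩
    linear_combination hnorm - A * hA - α * m ^ 2 * ht1
  simp only [Prod.mk.injEq]
  interval_cases t
  · obtain ⟨hA, rfl⟩ := rotation (by norm_num)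
    rw [hA] at hc hd
    exact Or.inr <| Or.inr <| Or.inr
      ⟨cancel (by linear_combination hc), cancel (by linear_combination hd)⟩
  · rcases mul_eq_zero.mp (by linear_combination hnorm : (A - m) * (A + m) = 0) with hA | hA
    · rw [sub_eq_zero.mp hA] at hc hd
      exact Or.inl ⟨cancel (by linear_combination hc), cancel (by linear_combination hd)⟩
    · rw [eq_neg_of_add_eq_zero_left hA] at hc hd
      exact Or.inr <| Or.inl
        ⟨cancel (by linear_combination hc), cancel (by linear_combination hd)⟩
  · obtain ⟨hA, rfl⟩ := rotation (by norm_num)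
    rw [hA] at hc hd
    exact Or.inr <| Or.inr <| Or.inl
      ⟨cancel (by linear_combination hc), cancel (by linear_combination hd)⟩

def reps (α n : ℕ) : Set (ℤ × ℤ) := {p | (n : ℤ) = p.1 ^ 2 + (α : ℤ) * p.2 ^ 2}

def primitiveReps (α n : ℕ) : Set (ℤ × ℤ) := {p ∈ reps α n | Int.gcd p.1 p.2 = 1}

theorem isCoprime_of_mem_primitiveReps {α n : ℕ} {q : ℤ × ℤ}
    (hq : q ∈ primitiveReps α n) : IsCoprime q.2 (n : ℤ) := by
  rw [hq.1]
  exact (Int.isCoprime_iff_gcd_eq_one.mpr hq.2).isCoprime_sq_add_mul_sq _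

theorem ncard_primitiveReps_le {α m : ℕ} (hα : 0 < α) (hm : 0 < m)
    (hsq : ∀ p : ℕ, p.Prime → p ^ 2 ∣ α → ¬ p ^ 2 ∣ m) :
    (primitiveReps α m).ncard ≤ 4 * m.divisors.card := by
  rcases (primitiveReps α m).eq_empty_or_nonempty with h | ⟨q₀, hq₀⟩
  · simp [h]
  have : NeZero m := ⟨hm.ne'⟩
  have hunit : ∀ q ∈ primitiveReps α m, (q.2 : ZMod m) * (q.2 : ZMod m)⁻¹ = 1 := fun q hq =>
    ZMod.mul_inv_of_unit _ (ZMod.isUnit_intCast_of_isCoprime (isCoprime_of_mem_primitiveReps hq))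
  let f : ℤ × ℤ → ZMod m := fun q => q.1 * (q.2 : ZMod m)⁻¹
  have hmaps : Set.MapsTo f (primitiveReps α m) {s | s ^ 2 = ((-α : ℤ) : ZMod m)} := by
    intro q hq
    have h0 : (q.1 : ZMod m) ^ 2 + α * (q.2 : ZMod m) ^ 2 = 0 := by
      simpa using (congrArg (Int.cast : ℤ → ZMod m) hq.1).symm
    show (q.1 * (q.2 : ZMod m)⁻¹) ^ 2 = _
    push_cast
    linear_combination
      ((q.2 : ZMod m)⁻¹) ^ 2 * h0 - α * (q.2 * (q.2 : ZMod m)⁻¹ + 1) * hunit q hq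
  have hfiber : ∀ s ∈ {s : ZMod m | s ^ 2 = ((-α : ℤ) : ZMod m)},
      (primitiveReps α m ∩ f ⁻¹' {s}).ncard ≤ 4 := by
    intro s _
    rcases (primitiveReps α m ∩ f ⁻¹' {s}).eq_empty_or_nonempty with
      h | ⟨⟨a, b⟩, hab, hfab⟩
    · simp [h]
    have hsub : primitiveReps α m ∩ f ⁻¹' {s} ⊆
        ↑({(a, b), (-a, -b), (-b, a), (b, -a)} : Finset (ℤ × ℤ)) := by
      rintro ⟨c, d⟩ ⟨hcd, hfcd⟩
      have hdvd : (m : ℤ) ∣ a * d - c * b := by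
        rw [← ZMod.intCast_zmod_eq_zero_iff_dvd]
        have hf : (a : ZMod m) * (b : ZMod m)⁻¹ = c * (d : ZMod m)⁻¹ := hfab.trans hfcd.symm
        push_cast
        linear_combination (b * d : ZMod m) * hf - (a * d : ZMod m) * hunit _ hab +
          (c * b : ZMod m) * hunit _ hcd
      simpa using Int.eq_of_sq_add_mul_sq_eq_of_dvd (by omega) (by omega) hab.1 hcd.1 hdvd
    exact (Set.ncard_le_ncard hsub (Finset.finite_toSet _)).trans
      ((Set.ncard_coe_finset _).trans_le Finset.card_le_four)
  calc _ ≤ 4 * _ := Set.ncard_le_mul_ncard_of_mapsTo (Set.toFinite _) hmaps 4 hfiber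
    _ ≤ 4 * m.divisors.card := by
      gcongr
      refine ZMod.ncard_sq_eq_le_card_divisors _ hm fun p hp hpm hpα => hsq p hp ?_ hpm
      have hcop := isCoprime_of_mem_primitiveReps hq₀
      rw [hq₀.1] at hcop
      have := (Nat.prime_iff_prime_int.mp hp).sq_dvd_of_sq_dvd_sq_add_mul_sq hcop
        (hq₀.1 ▸ (by exact_mod_cast hpm)) (dvd_neg.mp hpα)
      exact_mod_cast this

theorem reps_eq_biUnion {α n : ℕ} (hn : 0 < n) :
    reps α n = ⋃ g ∈ n.divisors.filter (· ^ 2 ∣ n),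
      ((g : ℤ) • ·) '' primitiveReps α (n / g ^ 2) := by
  ext ⟨x, y⟩
  simp only [Set.mem_iUnion, Set.mem_image, Finset.mem_filter, Nat.mem_divisors, exists_prop]
  constructor
  · intro h
    have hgcd : 0 < Int.gcd x y := Nat.pos_of_ne_zero fun h0 => by
      obtain ⟨rfl, rfl⟩ := Int.gcd_eq_zero_iff.mp h0
      change (n : ℤ) = _ at h
      simp at h
      omega
    obtain ⟨g, a, b, hg, hab, rfl, rfl⟩ := Int.exists_gcd_one' hgcd
    have hn' : (n : ℤ) = g ^ 2 * (a ^ 2 + α * b ^ 2) := by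
      change (n : ℤ) = _ at h; rw [h]; ring
    obtain ⟨k, rfl⟩ : g ^ 2 ∣ n := by exact_mod_cast Dvd.intro _ hn'.symm
    refine ⟨g, ⟨⟨(dvd_pow_self g two_ne_zero).mul_right k, hn.ne'⟩, dvd_mul_right _ _⟩,
      (a, b), ⟨?_, hab⟩, by simp [mul_comm]⟩
    change ((g ^ 2 * k / g ^ 2 : ℕ) : ℤ) = _
    rw [Nat.mul_div_cancel_left k (by positivity)]
    push_cast at hn'
    exact mul_left_cancel₀ (by positivity) hn'
  · rintro ⟨g, ⟨-, k, rfl⟩, ⟨a, b⟩, ⟨hab, -⟩, hxy⟩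
    have hg : 0 < g := Nat.pos_of_ne_zero fun h0 => by simp [h0] at hn
    change ((g ^ 2 * k / g ^ 2 : ℕ) : ℤ) = _ at hab
    rw [Nat.mul_div_cancel_left k (by positivity)] at hab
    simp only [Prod.smul_mk, smul_eq_mul, Prod.mk.injEq] at hxy
    obtain ⟨rfl, rfl⟩ := hxy
    change ((g ^ 2 * k : ℕ) : ℤ) = _
    push_cast
    rw [hab]
    ring

theorem ncard_reps_le_of_forall_prime_sq_dvd {α n : ℕ} (hα : 0 < α) (hn : 0 < n)
    (hsq : ∀ p : ℕ, p.Prime → p ^ 2 ∣ α → ¬ p ^ 2 ∣ n) :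
    (reps α n).ncard ≤ 4 * n.divisors.card ^ 2 := by
  rw [reps_eq_biUnion hn]
  refine (Set.ncard_biUnion_le _ _).trans ?_
  calc _ ≤ ∑ g ∈ n.divisors.filter (· ^ 2 ∣ n), 4 * n.divisors.card := by
        refine Finset.sum_le_sum fun g hg => ?_
        obtain ⟨-, hg2⟩ := Finset.mem_filter.mp hg
        have hg0 : (g : ℤ) ≠ 0 := by
          rintro h; simp [Int.natCast_eq_zero.mp h, hn.ne'] at hg2
        have hdvd : n / g ^ 2 ∣ n := Nat.div_dvd_of_dvd hg2
        rw [Set.ncard_image_of_injective _ (smul_right_injective _ hg0)]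
        calc _ ≤ 4 * (n / g ^ 2).divisors.card :=
              ncard_primitiveReps_le hα (Nat.pos_of_dvd_of_pos hdvd hn)
                fun p hp hpα hpm => hsq p hp hpα (hpm.trans hdvd)
          _ ≤ 4 * n.divisors.card := by
              gcongr
    _ ≤ n.divisors.card * (4 * n.divisors.card) := by
        rw [Finset.sum_const, smul_eq_mul]
        gcongr
        exact Finset.filter_subset _ _
    _ = 4 * n.divisors.card ^ 2 := by ring

theorem reps_sq_mul_sq_mul {α n : ℕ} (d : ℕ) (hd : d ≠ 0) :
    reps (d ^ 2 * α) (d ^ 2 * n) = Prod.map ((d : ℤ) * ·) id '' reps α n := by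
  have hd' : (d : ℤ) ^ 2 ≠ 0 := by positivity
  ext ⟨x, y⟩
  constructor
  · intro (h : ((d ^ 2 * n : ℕ) : ℤ) = x ^ 2 + ((d ^ 2 * α : ℕ) : ℤ) * y ^ 2)
    push_cast at h
    obtain ⟨x', rfl⟩ : (d : ℤ) ∣ x :=
      (Int.pow_dvd_pow_iff two_ne_zero).mp ⟨n - α * y ^ 2, by linear_combination -h⟩
    exact ⟨(x', y), mul_left_cancel₀ hd' (by linear_combination h), rfl⟩
  · rintro ⟨⟨x', y'⟩, (h : (n : ℤ) = x' ^ 2 + α * y' ^ 2), hxy⟩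
    obtain ⟨rfl, rfl⟩ := Prod.mk.inj hxy
    change ((d ^ 2 * n : ℕ) : ℤ) = (d * x') ^ 2 + ((d ^ 2 * α : ℕ) : ℤ) * y' ^ 2
    push_cast
    linear_combination (d : ℤ) ^ 2 * h

theorem ncard_reps_sq_mul_sq_mul {α n d : ℕ} (hd : d ≠ 0) :
    (reps (d ^ 2 * α) (d ^ 2 * n)).ncard = (reps α n).ncard := by
  rw [reps_sq_mul_sq_mul d hd, Set.ncard_image_of_injective _
    ((mul_right_injective₀ (Int.natCast_ne_zero.mpr hd)).prodMap Function.injective_id)]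

theorem representation_count_le (α n : ℕ) (hα : 1 ≤ α) (hn : 1 ≤ n) :
    Set.ncard {p : ℤ × ℤ | (n : ℤ) = p.1 ^ 2 + (α : ℤ) * p.2 ^ 2} ≤
      6 * n.divisors.card ^ 2 := by
  change (reps α n).ncard ≤ _
  induction α using Nat.strong_induction_on generalizing n with
  | _ α ih =>
  by_cases h : ∃ p : ℕ, p.Prime ∧ p ^ 2 ∣ α ∧ p ^ 2 ∣ n
  · obtain ⟨p, hp, ⟨α', rfl⟩, ⟨n', rfl⟩⟩ := h
    have hp2 : 1 < p ^ 2 := Nat.one_lt_pow two_ne_zero hp.one_lt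
    rw [ncard_reps_sq_mul_sq_mul hp.ne_zero]
    calc _ ≤ 6 * n'.divisors.card ^ 2 :=
          ih α' (lt_mul_left (Nat.pos_of_mul_pos_left hα) hp2) n' (Nat.pos_of_mul_pos_left hα)
            (Nat.pos_of_mul_pos_left hn)
      _ ≤ 6 * (p ^ 2 * n').divisors.card ^ 2 := by
          gcongr
          exact dvd_mul_left _ _
  · push Not at h
    exact (ncard_reps_le_of_forall_prime_sq_dvd hα hn h).trans (by omega)
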